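/- Let A = (a_ij) ∈ ℝ^{n×n} be an H₊-matrix and A = (M₁+φ) − (N₁+φ) an H-splitting of A (i.e. ⟨M₁+φ⟩ − |N₁+φ| is a nonsingular M-matrix), with φ diagonal and φ₁ = diag(w_11,…,w_nn), φ₂ = diag(ξ_11,…,ξ_nn) positive diagonal, and φ₂ ≥ D_{φ₁} = φ₁·diag(A). Let G = (g_ij) ≥ 0 satisfy |ψ(x) − ψ(y)| ≤ G|x − y| for all x, y ∈ ℝⁿ, together with g_ii ≤ (w_ii|n_ii + φ_ii| − (w_ii n_ii + |w_ii φ_ii|))/(2ξ_ii) for all i and g_ij ≤ (|w_ii m_ij| + |w_ii n_ij| − |w_ii a_ij|)/(2ξ_ii) for i ≠ j, where M₁ = (m_ij), N₁ = (n_ij) and φ = diag(φ_11,…,φ_nn). Then ρ(L) < 1 for L = |(M_{φ₁}+φ_{φ₁}+φ₂)⁻¹|(|N_{φ₁}+φ_{φ₁}| + |A_{φ₁}−φ₂| + 2φ₂G); consequently, if z* solves ICP(q,A,ψ), the sequence generated by Method 3.1 converges to z* from any initial vector and z* is the unique solution. -/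

import Mathlib

open Matrix Finset

noncomputable def specRad {n : ℕ} (A : Matrix (Fin n) (Fin n) ℝ) : ℝ :=
  (spectralRadius ℂ (A.map (algebraMap ℝ ℂ))).toReal

def matAbs {n : ℕ} (A : Matrix (Fin n) (Fin n) ℝ) : Matrix (Fin n) (Fin n) ℝ :=
  fun i j => |A i j|

def vecAbs {n : ℕ} (x : Fin n → ℝ) : Fin n → ℝ := fun i => |x i|

def cmpMat {n : ℕ} (A : Matrix (Fin n) (Fin n) ℝ) : Matrix (Fin n) (Fin n) ℝ :=
  fun i j => if i = j then |A i j| else -|A i j|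

def PosDiag {n : ℕ} (Φ : Matrix (Fin n) (Fin n) ℝ) : Prop :=
  Φ.IsDiag ∧ ∀ i, 0 < Φ i i

def ZMat {n : ℕ} (A : Matrix (Fin n) (Fin n) ℝ) : Prop :=
  ∀ i j, i ≠ j → A i j ≤ 0

def NonsingularMMatrix {n : ℕ} (A : Matrix (Fin n) (Fin n) ℝ) : Prop :=
  ZMat A ∧ IsUnit A.det ∧ ∀ i j, 0 ≤ A⁻¹ i j

def SDD {n : ℕ} (A : Matrix (Fin n) (Fin n) ℝ) : Prop :=
  ∀ i, ∑ j ∈ Finset.univ.erase i, |A i j| < |A i i|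

def ICPsol {n : ℕ} (A : Matrix (Fin n) (Fin n) ℝ) (q : Fin n → ℝ)
    (ψ : (Fin n → ℝ) → (Fin n → ℝ)) (z : Fin n → ℝ) : Prop :=
  (∀ i, 0 ≤ (A *ᵥ z + q) i) ∧ (∀ i, 0 ≤ (z - ψ z) i) ∧ (A *ᵥ z + q) ⬝ᵥ (z - ψ z) = 0

def HplusMatrix {n : ℕ} (A : Matrix (Fin n) (Fin n) ℝ) : Prop :=
  NonsingularMMatrix (cmpMat A) ∧ ∀ i, 0 < A i i

/-!
Let `v > 0` solve `(⟨M₁ + φ⟩ - |N₁ + φ|) v = 1`. With `B = M_{φ₁} + φ_{φ₁} + φ₂` and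
`C = |N_{φ₁} + φ_{φ₁}| + |A_{φ₁} - φ₂| + 2 φ₂ G`, the bounds on `G` are exactly what makes
`2 φ₁ (⟨M₁ + φ⟩ - |N₁ + φ|) ≤ ⟨B⟩ - C` entrywise, so `C v < ⟨B⟩ v`. Then `B` is an H-matrix,
`|B⁻¹| ≤ ⟨B⟩⁻¹`, and `L = |B⁻¹| C` satisfies `L v ≤ c v` for some `c < 1`. This bounds `ρ(L)`
by `c`; and since the iteration map `T` satisfies `|T x - T y| ≤ L |x - y|` while every solution
of the ICP is a fixed point of `T`, the errors decay like `c ^ k` in the `v`-weighted maximum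
norm, which also forces uniqueness.
-/

namespace Matrix

variable {n : ℕ}

theorem mulVec_le_mulVec_of_nonneg {M : Matrix (Fin n) (Fin n) ℝ} (hM : ∀ i j, 0 ≤ M i j)
    {x y : Fin n → ℝ} (h : x ≤ y) : M *ᵥ x ≤ M *ᵥ y := fun i => by
  simp only [mulVec, dotProduct]
  exact Finset.sum_le_sum fun j _ => mul_le_mul_of_nonneg_left (h j) (hM i j)

theorem mulVec_le_mulVec_of_le {M M' : Matrix (Fin n) (Fin n) ℝ} (h : ∀ i j, M i j ≤ M' i j)
    {x : Fin n → ℝ} (hx : 0 ≤ x) : M *ᵥ x ≤ M' *ᵥ x := fun i => by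
  simp only [mulVec, dotProduct]
  exact Finset.sum_le_sum fun j _ => mul_le_mul_of_nonneg_right (h i j) (hx j)

theorem mulVec_nonneg_of_nonneg {M : Matrix (Fin n) (Fin n) ℝ} (hM : ∀ i j, 0 ≤ M i j)
    {x : Fin n → ℝ} (hx : 0 ≤ x) : 0 ≤ M *ᵥ x := by
  simpa using mulVec_le_mulVec_of_nonneg hM hx

theorem mulVec_lt_mulVec_of_diag_mul_le {d v : Fin n → ℝ} {W X Y : Matrix (Fin n) (Fin n) ℝ}
    (hd : ∀ i, 0 < d i) (hv : 0 ≤ v) (hWv : W *ᵥ v = fun _ => 1)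
    (h : ∀ i j, d i * W i j ≤ X i j - Y i j) (i : Fin n) : (Y *ᵥ v) i < (X *ᵥ v) i := by
  have hle := mulVec_le_mulVec_of_le (M := diagonal d * W) (M' := X - Y)
    (fun i j => by simpa [diagonal_mul] using h i j) hv i
  rw [← mulVec_mulVec, hWv, mulVec_diagonal, sub_mulVec, Pi.sub_apply, mul_one] at hle
  linarith [hd i]

theorem IsDiag.mul_apply {D : Matrix (Fin n) (Fin n) ℝ} (hD : D.IsDiag)
    (X : Matrix (Fin n) (Fin n) ℝ) (i j : Fin n) : (D * X) i j = D i i * X i j := by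
  conv_lhs => rw [← hD.diagonal_diag]
  rw [diagonal_mul]; rfl

theorem IsDiag.mulVec_apply {D : Matrix (Fin n) (Fin n) ℝ} (hD : D.IsDiag)
    (x : Fin n → ℝ) (i : Fin n) : (D *ᵥ x) i = D i i * x i := by
  conv_lhs => rw [← hD.diagonal_diag]
  rw [mulVec_diagonal]; rfl

end Matrix

section

variable {n : ℕ}

theorem vecAbs_mulVec_le (M : Matrix (Fin n) (Fin n) ℝ) (x : Fin n → ℝ) :
    vecAbs (M *ᵥ x) ≤ matAbs M *ᵥ vecAbs x := fun i =>
  (Finset.abs_sum_le_sum_abs (fun j => M i j * x j) univ).trans_eq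
    (by simp only [abs_mul]; rfl)

theorem zMat_cmpMat (B : Matrix (Fin n) (Fin n) ℝ) : ZMat (cmpMat B) := fun i j hij => by
  simp [cmpMat, hij]

theorem cmpMat_mulVec_vecAbs_le (B : Matrix (Fin n) (Fin n) ℝ) (x : Fin n → ℝ) :
    cmpMat B *ᵥ vecAbs x ≤ vecAbs (B *ᵥ x) := by
  intro i
  have hcmp : (cmpMat B *ᵥ vecAbs x) i = |B i i * x i| - ∑ j ∈ univ.erase i, |B i j * x j| := by
    rw [mulVec, dotProduct, ← Finset.add_sum_erase _ _ (mem_univ i), sub_eq_add_neg,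
      ← Finset.sum_neg_distrib]
    refine congrArg₂ (· + ·) (by simp [cmpMat, vecAbs, abs_mul]) (Finset.sum_congr rfl ?_)
    intro j hj
    simp [cmpMat, vecAbs, abs_mul, (Finset.ne_of_mem_erase hj).symm]
  have hB : B i i * x i = (B *ᵥ x) i - ∑ j ∈ univ.erase i, B i j * x j := by
    rw [mulVec, dotProduct, ← Finset.add_sum_erase _ _ (mem_univ i), add_sub_cancel_right]
  rw [hcmp, sub_le_iff_le_add, hB]
  exact (abs_sub _ _).trans (add_le_add_right (Finset.abs_sum_le_sum_abs _ _) _)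

theorem ZMat.mulVec_apply_le_diag_mul {W : Matrix (Fin n) (Fin n) ℝ} (hW : ZMat W)
    {v : Fin n → ℝ} (hv : 0 ≤ v) (i : Fin n) : (W *ᵥ v) i ≤ W i i * v i := by
  rw [mulVec, dotProduct, ← Finset.add_sum_erase _ _ (mem_univ i)]
  exact (add_le_iff_nonpos_right _).2 <| Finset.sum_nonpos fun j hj =>
    mul_nonpos_of_nonpos_of_nonneg (hW i j (Finset.ne_of_mem_erase hj).symm) (hv j)

/-- At an index minimizing `(y - x) / v`, a negative minimum `s` would make
`Z (y - x - s v)` nonpositive there, while it is positive. -/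
theorem ZMat.le_of_mulVec_le {Z : Matrix (Fin n) (Fin n) ℝ} (hZ : ZMat Z) {v : Fin n → ℝ}
    (hv : ∀ i, 0 < v i) (hZv : ∀ i, 0 < (Z *ᵥ v) i) {x y : Fin n → ℝ}
    (h : Z *ᵥ x ≤ Z *ᵥ y) : x ≤ y := by
  by_contra hxy
  obtain ⟨k, hk⟩ : ∃ k, y k < x k := by simpa [Pi.le_def] using hxy
  obtain ⟨i, -, hi⟩ := Finset.exists_min_image univ (fun j => (y - x) j / v j) ⟨k, mem_univ k⟩
  set s := (y - x) i / v i with hs_def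
  have hs : s < 0 :=
    (hi k (mem_univ k)).trans_lt (div_neg_of_neg_of_pos (by simpa using hk) (hv k))
  have hgap : 0 ≤ y - x - s • v := fun j => by
    have := (le_div_iff₀ (hv j)).1 (hi j (mem_univ j))
    simp only [Pi.zero_apply, Pi.sub_apply, Pi.smul_apply, smul_eq_mul] at this ⊢
    linarith
  have hgap_i : (y - x - s • v) i = 0 := by
    simp [hs_def, div_mul_cancel₀ _ (hv i).ne']
  have hle : (Z *ᵥ (y - x - s • v)) i ≤ 0 :=
    (hZ.mulVec_apply_le_diag_mul hgap i).trans_eq (by rw [hgap_i, mul_zero])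
  have hpos : 0 < (Z *ᵥ (y - x - s • v)) i := by
    have hZi := h i
    simp only [mulVec_sub, mulVec_smul, Pi.sub_apply, Pi.smul_apply, smul_eq_mul]
    nlinarith [hZv i]
  exact hle.not_gt hpos

theorem NonsingularMMatrix.one_le_diag_mul {W : Matrix (Fin n) (Fin n) ℝ}
    (hW : NonsingularMMatrix W) (i : Fin n) : 1 ≤ W i i * (W⁻¹ *ᵥ fun _ => 1) i := by
  have h := hW.1.mulVec_apply_le_diag_mul
    (mulVec_nonneg_of_nonneg hW.2.2 fun _ => zero_le_one) i
  rwa [mulVec_mulVec, mul_nonsing_inv _ hW.2.1, one_mulVec] at h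

theorem NonsingularMMatrix.diag_pos {W : Matrix (Fin n) (Fin n) ℝ}
    (hW : NonsingularMMatrix W) (i : Fin n) : 0 < W i i :=
  pos_of_mul_pos_left (one_pos.trans_le (hW.one_le_diag_mul i))
    (mulVec_nonneg_of_nonneg hW.2.2 (fun _ => zero_le_one) i)

theorem NonsingularMMatrix.exists_pos_mulVec_eq_one {W : Matrix (Fin n) (Fin n) ℝ}
    (hW : NonsingularMMatrix W) : ∃ v : Fin n → ℝ, (∀ i, 0 < v i) ∧ W *ᵥ v = fun _ => 1 :=
  ⟨W⁻¹ *ᵥ fun _ => 1,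
    fun i => pos_of_mul_pos_right (one_pos.trans_le (hW.one_le_diag_mul i)) (hW.diag_pos i).le,
    by rw [mulVec_mulVec, mul_nonsing_inv _ hW.2.1, one_mulVec]⟩

theorem PosDiag.nonneg {Φ : Matrix (Fin n) (Fin n) ℝ} (h : PosDiag Φ) (i j : Fin n) :
    0 ≤ Φ i j := by
  rcases eq_or_ne i j with rfl | hij
  · exact (h.2 i).le
  · exact (h.1 hij).ge

end

section HMatrix

variable {n : ℕ} {B : Matrix (Fin n) (Fin n) ℝ} {v : Fin n → ℝ}

theorem le_of_cmpMat_mulVec_le (hv : ∀ i, 0 < v i) (hBv : ∀ i, 0 < (cmpMat B *ᵥ v) i)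
    {x y : Fin n → ℝ} (h : cmpMat B *ᵥ x ≤ cmpMat B *ᵥ y) : x ≤ y :=
  (zMat_cmpMat B).le_of_mulVec_le hv hBv h

theorem isUnit_det_cmpMat (hv : ∀ i, 0 < v i) (hBv : ∀ i, 0 < (cmpMat B *ᵥ v) i) :
    IsUnit (cmpMat B).det := by
  rw [isUnit_iff_ne_zero, Ne, ← exists_mulVec_eq_zero_iff]
  rintro ⟨x, hx0, hx⟩
  have h : cmpMat B *ᵥ x = cmpMat B *ᵥ 0 := by rw [hx, mulVec_zero]
  exact hx0 (le_antisymm (le_of_cmpMat_mulVec_le hv hBv h.le)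
    (le_of_cmpMat_mulVec_le hv hBv h.ge))

theorem isUnit_det_of_cmpMat (hv : ∀ i, 0 < v i) (hBv : ∀ i, 0 < (cmpMat B *ᵥ v) i) :
    IsUnit B.det := by
  rw [isUnit_iff_ne_zero, Ne, ← exists_mulVec_eq_zero_iff]
  rintro ⟨x, hx0, hx⟩
  have h : vecAbs x ≤ 0 := le_of_cmpMat_mulVec_le hv hBv <| by
    rw [mulVec_zero]
    exact (cmpMat_mulVec_vecAbs_le B x).trans_eq (by rw [hx]; exact funext fun _ => abs_zero)
  exact hx0 (funext fun i => abs_nonpos_iff.1 (h i))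

theorem abs_inv_apply_le_cmpMat_inv_apply (hv : ∀ i, 0 < v i)
    (hBv : ∀ i, 0 < (cmpMat B *ᵥ v) i) (i j : Fin n) : |B⁻¹ i j| ≤ (cmpMat B)⁻¹ i j := by
  have hcol : vecAbs (B⁻¹ *ᵥ Pi.single j 1) ≤ (cmpMat B)⁻¹ *ᵥ Pi.single j 1 := by
    refine le_of_cmpMat_mulVec_le hv hBv ((cmpMat_mulVec_vecAbs_le B _).trans_eq ?_)
    rw [mulVec_mulVec, mulVec_mulVec, mul_nonsing_inv _ (isUnit_det_of_cmpMat hv hBv),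
      mul_nonsing_inv _ (isUnit_det_cmpMat hv hBv), one_mulVec]
    funext k
    simp only [vecAbs, Pi.single_apply]
    split_ifs <;> simp
  simpa [vecAbs, mulVec_single] using hcol i

theorem matAbs_inv_mul_mulVec_le (hv : ∀ i, 0 < v i) (hBv : ∀ i, 0 < (cmpMat B *ᵥ v) i)
    {C : Matrix (Fin n) (Fin n) ℝ} (hC : ∀ i j, 0 ≤ C i j) {c : ℝ}
    (hCv : C *ᵥ v ≤ c • (cmpMat B *ᵥ v)) : (matAbs B⁻¹ * C) *ᵥ v ≤ c • v := by
  have hinv := abs_inv_apply_le_cmpMat_inv_apply hv hBv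
  have hCv0 : 0 ≤ C *ᵥ v := mulVec_nonneg_of_nonneg hC fun i => (hv i).le
  rw [← mulVec_mulVec]
  calc matAbs B⁻¹ *ᵥ (C *ᵥ v) ≤ (cmpMat B)⁻¹ *ᵥ (C *ᵥ v) :=
        mulVec_le_mulVec_of_le hinv hCv0
    _ ≤ (cmpMat B)⁻¹ *ᵥ (c • (cmpMat B *ᵥ v)) :=
        mulVec_le_mulVec_of_nonneg (fun i j => (abs_nonneg _).trans (hinv i j)) hCv
    _ = c • v := by
        rw [mulVec_smul, mulVec_mulVec, nonsing_inv_mul _ (isUnit_det_cmpMat hv hBv),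
          one_mulVec]

end HMatrix

open Filter Topology

theorem exists_lt_one_le_smul {ι : Type*} [Finite ι] {a b : ι → ℝ} (h : ∀ i, a i < b i) :
    ∃ c : ℝ, 0 ≤ c ∧ c < 1 ∧ a ≤ c • b := by
  have hnear : ∀ᶠ c in 𝓝 (1 : ℝ), 0 ≤ c ∧ ∀ i, a i ≤ c * b i :=
    (lt_mem_nhds one_pos).mono (fun _ => le_of_lt) |>.and <| eventually_all.2 fun i =>
      ((tendsto_id.mul_const (b i)).eventually (lt_mem_nhds (by simpa using h i))).mono
        fun _ => le_of_lt
  obtain ⟨c, ⟨hc0, hc⟩, hc1⟩ := ((hnear.filter_mono nhdsWithin_le_nhds).and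
    (self_mem_nhdsWithin : ∀ᶠ c in 𝓝[<] (1 : ℝ), c < 1)).exists
  exact ⟨c, hc0, hc1, hc⟩

theorem exists_le_smul_of_pos {ι : Type*} [Finite ι] {v : ι → ℝ} (hv : ∀ i, 0 < v i)
    (x : ι → ℝ) : ∃ t : ℝ, 0 ≤ t ∧ x ≤ t • v :=
  ((eventually_ge_atTop 0).and <| eventually_all.2 fun i =>
    (tendsto_id.atTop_mul_const (hv i)).eventually_ge_atTop (x i)).exists

section Contraction

variable {n : ℕ} {L : Matrix (Fin n) (Fin n) ℝ} {v : Fin n → ℝ} {c : ℝ}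

theorem vecAbs_le_pow_smul (hL : ∀ i j, 0 ≤ L i j) (hc : 0 ≤ c) (hLv : L *ᵥ v ≤ c • v)
    {e : ℕ → Fin n → ℝ} (he : ∀ k, vecAbs (e (k + 1)) ≤ L *ᵥ vecAbs (e k)) {t : ℝ}
    (ht : 0 ≤ t) (h0 : vecAbs (e 0) ≤ t • v) (k : ℕ) : vecAbs (e k) ≤ (t * c ^ k) • v := by
  induction k with
  | zero => simpa using h0
  | succ k ih =>
    calc vecAbs (e (k + 1)) ≤ L *ᵥ vecAbs (e k) := he k
      _ ≤ L *ᵥ ((t * c ^ k) • v) := mulVec_le_mulVec_of_nonneg hL ih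
      _ = (t * c ^ k) • (L *ᵥ v) := mulVec_smul _ _ _
      _ ≤ (t * c ^ k) • (c • v) := smul_le_smul_of_nonneg_left hLv (by positivity)
      _ = (t * c ^ (k + 1)) • v := by rw [smul_smul, pow_succ, mul_assoc]

theorem tendsto_zero_of_vecAbs_le_mulVec (hL : ∀ i j, 0 ≤ L i j) (hv : ∀ i, 0 < v i)
    (hc0 : 0 ≤ c) (hc1 : c < 1) (hLv : L *ᵥ v ≤ c • v) {e : ℕ → Fin n → ℝ}
    (he : ∀ k, vecAbs (e (k + 1)) ≤ L *ᵥ vecAbs (e k)) : Tendsto e atTop (𝓝 0) := by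
  obtain ⟨t, ht, h0⟩ := exists_le_smul_of_pos hv (vecAbs (e 0))
  have hgeom : Tendsto (fun k => t * c ^ k) atTop (𝓝 0) := by
    simpa using (tendsto_pow_atTop_nhds_zero_of_lt_one hc0 hc1).const_mul t
  refine tendsto_pi_nhds.2 fun i => squeeze_zero_norm
    (fun k => vecAbs_le_pow_smul hL hc0 hLv he ht h0 k i) ?_
  simpa using hgeom.mul_const (v i)

section Iteration

variable {T : (Fin n → ℝ) → Fin n → ℝ}

theorem tendsto_of_vecAbs_sub_le_mulVec (hL : ∀ i j, 0 ≤ L i j) (hv : ∀ i, 0 < v i)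
    (hc0 : 0 ≤ c) (hc1 : c < 1) (hLv : L *ᵥ v ≤ c • v)
    (hT : ∀ x y, vecAbs (T x - T y) ≤ L *ᵥ vecAbs (x - y)) {x : Fin n → ℝ} (hx : T x = x)
    {z : ℕ → Fin n → ℝ} (hz : ∀ k, z (k + 1) = T (z k)) : Tendsto z atTop (𝓝 x) := by
  refine tendsto_sub_nhds_zero_iff.1 (tendsto_zero_of_vecAbs_le_mulVec hL hv hc0 hc1 hLv ?_)
  intro k
  rw [hz k]
  simpa only [hx] using hT (z k) x

theorem eq_of_vecAbs_sub_le_mulVec (hL : ∀ i j, 0 ≤ L i j) (hv : ∀ i, 0 < v i)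
    (hc0 : 0 ≤ c) (hc1 : c < 1) (hLv : L *ᵥ v ≤ c • v)
    (hT : ∀ x y, vecAbs (T x - T y) ≤ L *ᵥ vecAbs (x - y)) {x y : Fin n → ℝ} (hx : T x = x)
    (hy : T y = y) : x = y :=
  (tendsto_const_nhds_iff.1 <|
    tendsto_of_vecAbs_sub_le_mulVec hL hv hc0 hc1 hLv hT hy (z := fun _ => x) fun _ => hx.symm)

end Iteration

theorem le_of_smul_le_mulVec (hL : ∀ i j, 0 ≤ L i j) (hv : ∀ i, 0 < v i)
    (hLv : L *ᵥ v ≤ c • v) {y : Fin n → ℝ} (hy0 : 0 ≤ y) (hy : y ≠ 0) {μ : ℝ}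
    (h : μ • y ≤ L *ᵥ y) : μ ≤ c := by
  obtain ⟨k, hk⟩ := Function.ne_iff.1 hy
  obtain ⟨i, -, hi⟩ := Finset.exists_max_image univ (fun j => y j / v j) ⟨k, mem_univ k⟩
  set s := y i / v i with hs_def
  have hs : 0 ≤ s := div_nonneg (hy0 i) (hv i).le
  have hyi : 0 < y i := (div_pos_iff_of_pos_right (hv i)).1 <|
    (div_pos ((hy0 k).lt_of_ne' hk) (hv k)).trans_le (hi k (mem_univ k))
  have hys : y ≤ s • v := fun j => (div_le_iff₀ (hv j)).1 (hi j (mem_univ j))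
  have hμc : μ * y i ≤ c * y i :=
    calc μ * y i ≤ (L *ᵥ y) i := h i
      _ ≤ (L *ᵥ (s • v)) i := mulVec_le_mulVec_of_nonneg hL hys i
      _ = s * (L *ᵥ v) i := by rw [mulVec_smul]; rfl
      _ ≤ s * (c * v i) := mul_le_mul_of_nonneg_left (hLv i) hs
      _ = c * y i := by rw [hs_def, div_mul_comm, mul_div_cancel_right₀ _ (hv i).ne']
  exact le_of_mul_le_mul_right hμc hyi

theorem specRad_le_of_mulVec_le (hL : ∀ i j, 0 ≤ L i j) (hv : ∀ i, 0 < v i) (hc : 0 ≤ c)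
    (hLv : L *ᵥ v ≤ c • v) : specRad L ≤ c := by
  have hspec : ∀ μ ∈ spectrum ℂ (L.map (algebraMap ℝ ℂ)), ‖μ‖ ≤ c := by
    intro μ hμ
    rw [← spectrum_toLin', ← Module.End.hasEigenvalue_iff_mem_spectrum] at hμ
    obtain ⟨x, hx⟩ := hμ.exists_hasEigenvector
    have hLx : L.map (algebraMap ℝ ℂ) *ᵥ x = μ • x := by
      simpa only [toLin'_apply] using hx.apply_eq_smul
    refine le_of_smul_le_mulVec hL hv hLv (y := fun j => ‖x j‖) (fun j => norm_nonneg _)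
      (fun h => hx.2 (funext fun j => norm_eq_zero.1 (congrFun h j))) fun i => ?_
    calc ‖μ‖ * ‖x i‖ = ‖∑ j, (L i j : ℂ) * x j‖ := by
          rw [← norm_mul, ← smul_eq_mul, ← Pi.smul_apply, ← hLx]; rfl
      _ ≤ ∑ j, L i j * ‖x j‖ := (norm_sum_le _ _).trans_eq <| Finset.sum_congr rfl fun j _ => by
          rw [norm_mul, Complex.norm_real, Real.norm_of_nonneg (hL i j)]
  refine ENNReal.toReal_le_of_le_ofReal hc (iSup₂_le fun μ hμ => ?_)
  rw [← ENNReal.ofReal_coe_nnreal, coe_nnnorm]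
  exact ENNReal.ofReal_le_ofReal (hspec μ hμ)

/-- Both conclusions come from `L v ≤ c v` with `c < 1` for `L = |B⁻¹| C`. -/
theorem specRad_lt_one_and_tendsto_of_mulVec_lt_cmpMat {B C : Matrix (Fin n) (Fin n) ℝ}
    (hv : ∀ i, 0 < v i) (hC : ∀ i j, 0 ≤ C i j) (hCB : ∀ i, (C *ᵥ v) i < (cmpMat B *ᵥ v) i)
    {F : (Fin n → ℝ) → Fin n → ℝ} (hF : ∀ x y, vecAbs (F x - F y) ≤ C *ᵥ vecAbs (x - y)) :
    specRad (matAbs B⁻¹ * C) < 1 ∧ ∀ x, B *ᵥ x = F x →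
      (∀ z : ℕ → Fin n → ℝ, (∀ k, z (k + 1) = B⁻¹ *ᵥ F (z k)) → Tendsto z atTop (𝓝 x)) ∧
        ∀ y, B *ᵥ y = F y → y = x := by
  have hBv : ∀ i, 0 < (cmpMat B *ᵥ v) i := fun i =>
    (mulVec_nonneg_of_nonneg hC (fun j => (hv j).le) i).trans_lt (hCB i)
  obtain ⟨c, hc0, hc1, hCv⟩ := exists_lt_one_le_smul hCB
  have hL : ∀ i j, 0 ≤ (matAbs B⁻¹ * C) i j := fun i j => by
    rw [Matrix.mul_apply]
    exact Finset.sum_nonneg fun k _ => mul_nonneg (abs_nonneg _) (hC k j)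
  have hLv := matAbs_inv_mul_mulVec_le hv hBv hC hCv
  have hT : ∀ x y, vecAbs (B⁻¹ *ᵥ F x - B⁻¹ *ᵥ F y) ≤ (matAbs B⁻¹ * C) *ᵥ vecAbs (x - y) :=
    fun x y => by
      rw [← mulVec_sub, ← mulVec_mulVec]
      exact (vecAbs_mulVec_le _ _).trans
        (mulVec_le_mulVec_of_nonneg (fun _ _ => abs_nonneg _) (hF x y))
  have hfix : ∀ x, B *ᵥ x = F x → B⁻¹ *ᵥ F x = x := fun x hx => by
    rw [← hx, mulVec_mulVec, nonsing_inv_mul _ (isUnit_det_of_cmpMat hv hBv), one_mulVec]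
  refine ⟨(specRad_le_of_mulVec_le hL hv hc0 hLv).trans_lt hc1, fun x hx =>
    ⟨fun z hz => tendsto_of_vecAbs_sub_le_mulVec hL hv hc0 hc1 hLv hT (hfix x hx) hz,
      fun y hy => eq_of_vecAbs_sub_le_mulVec hL hv hc0 hc1 hLv hT (hfix y hy) (hfix x hx)⟩⟩

end Contraction

theorem abs_sub_eq_add_of_mul_eq_zero {a b : ℝ} (ha : 0 ≤ a) (hb : 0 ≤ b) (hab : a * b = 0) :
    |a - b| = a + b := by
  rcases mul_eq_zero.1 hab with rfl | rfl
  · rw [zero_sub, abs_neg, abs_of_nonneg hb, zero_add]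
  · rw [sub_zero, abs_of_nonneg ha, add_zero]

theorem ICPsol.mul_eq_zero {n : ℕ} {A : Matrix (Fin n) (Fin n) ℝ} {q : Fin n → ℝ}
    {ψ : (Fin n → ℝ) → Fin n → ℝ} {u : Fin n → ℝ} (hu : ICPsol A q ψ u) (i : Fin n) :
    (A *ᵥ u + q) i * (u - ψ u) i = 0 :=
  (Finset.sum_eq_zero_iff_of_nonneg fun j _ => mul_nonneg (hu.1 j) (hu.2.1 j)).1 hu.2.2 i
    (Finset.mem_univ i)

/-- Method 3.1 is
`z ↦ (M_{φ₁} + φ_{φ₁} + φ₂)⁻¹ (modulusRhs (N_{φ₁} + φ_{φ₁}) (A_{φ₁} - φ₂) φ₂ (φ₁ q) ψ z)`. -/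
def modulusRhs {n : ℕ} (N P D : Matrix (Fin n) (Fin n) ℝ) (r : Fin n → ℝ)
    (ψ : (Fin n → ℝ) → Fin n → ℝ) (z : Fin n → ℝ) : Fin n → ℝ :=
  N *ᵥ z + vecAbs (P *ᵥ z + r + D *ᵥ ψ z) - r + D *ᵥ ψ z

section ModulusRhs

variable {n : ℕ} {ψ : (Fin n → ℝ) → Fin n → ℝ}

theorem vecAbs_modulusRhs_sub_le (N P : Matrix (Fin n) (Fin n) ℝ) {D G : Matrix (Fin n) (Fin n) ℝ}
    (hD : ∀ i j, 0 ≤ D i j) (r : Fin n → ℝ)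
    (hψ : ∀ x y : Fin n → ℝ, ∀ i, |ψ x i - ψ y i| ≤ (G *ᵥ vecAbs (x - y)) i) (x y : Fin n → ℝ) :
    vecAbs (modulusRhs N P D r ψ x - modulusRhs N P D r ψ y) ≤
      (matAbs N + matAbs P + 2 • (D * G)) *ᵥ vecAbs (x - y) := by
  -- `vecAbs` is, by definition, the lattice absolute value `|·|` on `Fin n → ℝ`.
  set δ := vecAbs (x - y)
  have hDψ : |D *ᵥ (ψ x - ψ y)| ≤ (D * G) *ᵥ δ := calc
    |D *ᵥ (ψ x - ψ y)| ≤ matAbs D *ᵥ vecAbs (ψ x - ψ y) := vecAbs_mulVec_le _ _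
    _ = D *ᵥ vecAbs (ψ x - ψ y) := by rw [show matAbs D = D from funext₂ fun i j =>
          abs_of_nonneg (hD i j)]
    _ ≤ D *ᵥ (G *ᵥ δ) := mulVec_le_mulVec_of_nonneg hD (hψ x y)
    _ = (D * G) *ᵥ δ := mulVec_mulVec _ _ _
  have hdiff : modulusRhs N P D r ψ x - modulusRhs N P D r ψ y =
      N *ᵥ (x - y) + (|P *ᵥ x + r + D *ᵥ ψ x| - |P *ᵥ y + r + D *ᵥ ψ y|) + D *ᵥ (ψ x - ψ y) := by
    simp only [modulusRhs, mulVec_sub]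
    change _ - _ = _ + (vecAbs _ - vecAbs _) + _
    abel
  have hinner : (P *ᵥ x + r + D *ᵥ ψ x) - (P *ᵥ y + r + D *ᵥ ψ y) =
      P *ᵥ (x - y) + D *ᵥ (ψ x - ψ y) := by
    simp only [mulVec_sub]; abel
  change |_| ≤ _
  calc |modulusRhs N P D r ψ x - modulusRhs N P D r ψ y|
      ≤ |N *ᵥ (x - y)| + |P *ᵥ (x - y) + D *ᵥ (ψ x - ψ y)| + |D *ᵥ (ψ x - ψ y)| := by
        rw [hdiff, ← hinner]
        exact (abs_add_le _ _).trans (add_le_add_left ((abs_add_le _ _).trans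
          (add_le_add_right (abs_abs_sub_abs_le _ _) _)) _)
    _ ≤ |N *ᵥ (x - y)| + (|P *ᵥ (x - y)| + |D *ᵥ (ψ x - ψ y)|) + |D *ᵥ (ψ x - ψ y)| := by
        gcongr; exact abs_add_le _ _
    _ ≤ matAbs N *ᵥ δ + (matAbs P *ᵥ δ + (D * G) *ᵥ δ) + (D * G) *ᵥ δ := by
        gcongr
        · exact vecAbs_mulVec_le _ _
        · exact vecAbs_mulVec_le _ _
    _ = (matAbs N + matAbs P + 2 • (D * G)) *ᵥ δ := by
        rw [add_mulVec, add_mulVec, smul_mulVec, two_smul]; abel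

theorem ICPsol.modulusRhs_eq {A : Matrix (Fin n) (Fin n) ℝ} {q u : Fin n → ℝ}
    (hu : ICPsol A q ψ u) (N : Matrix (Fin n) (Fin n) ℝ) {D₁ D₂ : Matrix (Fin n) (Fin n) ℝ}
    (hD₁ : D₁.IsDiag) (hD₁0 : ∀ i, 0 ≤ D₁ i i) (hD₂ : D₂.IsDiag) (hD₂0 : ∀ i, 0 ≤ D₂ i i) :
    modulusRhs N (D₁ * A - D₂) D₂ (D₁ *ᵥ q) ψ u = (N + D₁ * A + D₂) *ᵥ u := by
  have hcompl : vecAbs (D₁ *ᵥ (A *ᵥ u + q) - D₂ *ᵥ (u - ψ u)) =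
      D₁ *ᵥ (A *ᵥ u + q) + D₂ *ᵥ (u - ψ u) := funext fun i => by
    simp only [vecAbs, Pi.sub_apply, Pi.add_apply, hD₁.mulVec_apply, hD₂.mulVec_apply]
    refine abs_sub_eq_add_of_mul_eq_zero (mul_nonneg (hD₁0 i) (hu.1 i))
      (mul_nonneg (hD₂0 i) (hu.2.1 i)) ?_
    have h0 := hu.mul_eq_zero i
    simp only [Pi.add_apply, Pi.sub_apply] at h0
    rw [mul_mul_mul_comm, h0, mul_zero]
  have harg : (D₁ * A - D₂) *ᵥ u + D₁ *ᵥ q + D₂ *ᵥ ψ u =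
      D₁ *ᵥ (A *ᵥ u + q) - D₂ *ᵥ (u - ψ u) := by
    rw [sub_mulVec, ← mulVec_mulVec, mulVec_add, mulVec_sub]; abel
  rw [modulusRhs, harg, hcompl, add_mulVec, add_mulVec, ← mulVec_mulVec, mulVec_add, mulVec_sub]
  abel

end ModulusRhs

theorem two_mul_diag_gap_le {w ξ m n f g : ℝ} (hw : 0 < w) (hξ : 0 < ξ) (hmn : n < m)
    (habs : |n + f| < |m + f|) (hξa : w * (m - n) ≤ ξ)
    (hg : g ≤ (w * |n + f| - (w * n + |w * f|)) / (2 * ξ)) :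
    2 * (w * (|m + f| - |n + f|)) ≤
      |w * m + w * f + ξ| - (|w * n + w * f| + |w * (m - n) - ξ| + 2 * (ξ * g)) := by
  have hmf : 0 < m + f := by
    by_contra! h
    rw [abs_of_nonpos h] at habs
    linarith [neg_le_abs (n + f)]
  have hg' := (le_div_iff₀ (by positivity)).1 hg
  have hB : |w * m + w * f + ξ| = w * m + w * f + ξ := abs_of_pos (by nlinarith)
  have hC : |w * (m - n) - ξ| = ξ - w * (m - n) := by rw [abs_of_nonpos (by linarith), neg_sub]
  have hN : |w * n + w * f| = w * |n + f| := by rw [← mul_add, abs_mul, abs_of_pos hw]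
  rw [abs_of_pos hmf, hB, hC, hN]
  linarith [le_abs_self (w * f)]

theorem two_mul_offDiag_gap_le {w ξ m n a g : ℝ} (hw : 0 < w) (hξ : 0 < ξ)
    (hg : g ≤ (|w * m| + |w * n| - |w * a|) / (2 * ξ)) :
    2 * (w * (-|m| - |n|)) ≤ -|w * m| - (|w * n| + |w * a| + 2 * (ξ * g)) := by
  have hg' := (le_div_iff₀ (by positivity)).1 hg
  rw [abs_mul w m, abs_mul w n, abs_of_pos hw] at *
  linarith

theorem two_mul_hSplitting_le_cmpMat_sub {n : ℕ} {A M₁ N₁ φ φ₁ φ₂ G : Matrix (Fin n) (Fin n) ℝ}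
    (hA : ∀ i, 0 < A i i) (hsplit : A = M₁ - N₁)
    (hW : ∀ i, 0 < (cmpMat (M₁ + φ) - matAbs (N₁ + φ)) i i)
    (hφ : φ.IsDiag) (hφ₁ : PosDiag φ₁) (hφ₂ : PosDiag φ₂)
    (hφ₂D : ∀ i, φ₁ i i * A i i ≤ φ₂ i i)
    (hGdiag : ∀ i, G i i ≤
      (φ₁ i i * |N₁ i i + φ i i| - (φ₁ i i * N₁ i i + |φ₁ i i * φ i i|)) / (2 * φ₂ i i))
    (hGoff : ∀ i j, i ≠ j → G i j ≤
      (|φ₁ i i * M₁ i j| + |φ₁ i i * N₁ i j| - |φ₁ i i * A i j|) / (2 * φ₂ i i))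
    (i j : Fin n) :
    2 * φ₁ i i * (cmpMat (M₁ + φ) - matAbs (N₁ + φ)) i j ≤
      cmpMat (φ₁ * M₁ + φ₁ * φ + φ₂) i j -
        (matAbs (φ₁ * N₁ + φ₁ * φ) + matAbs (φ₁ * A - φ₂) + 2 • (φ₂ * G)) i j := by
  have hAij : A i j = M₁ i j - N₁ i j := by rw [hsplit, Matrix.sub_apply]
  rcases eq_or_ne i j with rfl | hij
  · have hWi := hW i
    have hξa : φ₁ i i * (M₁ i i - N₁ i i) ≤ φ₂ i i := hAij ▸ hφ₂D i
    simp only [Matrix.sub_apply, Matrix.add_apply, two_smul, cmpMat, matAbs, if_true,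
      hφ₁.1.mul_apply, hφ₂.1.mul_apply, hAij] at hWi ⊢
    have := two_mul_diag_gap_le (hφ₁.2 i) (hφ₂.2 i) (by linarith [hA i]) (by linarith) hξa
      (hGdiag i)
    linarith
  · simp only [Matrix.sub_apply, Matrix.add_apply, two_smul, cmpMat, matAbs, if_neg hij,
      hφ₁.1.mul_apply, hφ₂.1.mul_apply, hφ hij, hφ₂.1 hij, mul_zero, add_zero, sub_zero]
    have := two_mul_offDiag_gap_le (hφ₁.2 i) (hφ₂.2 i) (hGoff i j hij)
    linarith

/-- Theorem 4.2, convergence of Method 3.1 for an H₊-matrix with an H-splitting. -/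
theorem stmt_6 {n : ℕ} (A M₁ N₁ φ φ₁ φ₂ G : Matrix (Fin n) (Fin n) ℝ)
    (q : Fin n → ℝ) (ψ : (Fin n → ℝ) → (Fin n → ℝ))
    (hA : HplusMatrix A)
    (hsplit : A = (M₁ + φ) - (N₁ + φ))
    (hHsplit : NonsingularMMatrix (cmpMat (M₁ + φ) - matAbs (N₁ + φ)))
    (hφ : φ.IsDiag) (hφ₁ : PosDiag φ₁) (hφ₂ : PosDiag φ₂)
    (hφ₂D : ∀ i j, (φ₁ * Matrix.diagonal A.diag) i j ≤ φ₂ i j)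
    (hG : ∀ i j, 0 ≤ G i j)
    (hψ : ∀ x y : Fin n → ℝ, ∀ i, |ψ x i - ψ y i| ≤ (G *ᵥ vecAbs (x - y)) i)
    (hGdiag : ∀ i, G i i ≤
      (φ₁ i i * |N₁ i i + φ i i| - (φ₁ i i * N₁ i i + |φ₁ i i * φ i i|)) / (2 * φ₂ i i))
    (hGoff : ∀ i j, i ≠ j → G i j ≤
      (|φ₁ i i * M₁ i j| + |φ₁ i i * N₁ i j| - |φ₁ i i * A i j|) / (2 * φ₂ i i)) :
    specRad (matAbs ((φ₁ * M₁ + φ₁ * φ + φ₂)⁻¹) *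
        (matAbs (φ₁ * N₁ + φ₁ * φ) + matAbs (φ₁ * A - φ₂) + 2 • (φ₂ * G))) < 1 ∧
      ∀ zstar : Fin n → ℝ, ICPsol A q ψ zstar →
        (∀ z : ℕ → Fin n → ℝ,
          (∀ k, z (k + 1) = (φ₁ * M₁ + φ₁ * φ + φ₂)⁻¹ *ᵥ
            ((φ₁ * N₁ + φ₁ * φ) *ᵥ z k +
              vecAbs ((φ₁ * A - φ₂) *ᵥ z k + φ₁ *ᵥ q + φ₂ *ᵥ ψ (z k)) -
              φ₁ *ᵥ q + φ₂ *ᵥ ψ (z k))) →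
          Filter.Tendsto z Filter.atTop (nhds zstar)) ∧
        ∀ w : Fin n → ℝ, ICPsol A q ψ w → w = zstar := by
  have hAMN : A = M₁ - N₁ := by rw [hsplit]; abel
  obtain ⟨v, hv, hWv⟩ := hHsplit.exists_pos_mulVec_eq_one
  have hC : ∀ i j,
      0 ≤ (matAbs (φ₁ * N₁ + φ₁ * φ) + matAbs (φ₁ * A - φ₂) + 2 • (φ₂ * G)) i j := fun i j => by
    have := mul_nonneg (hφ₂.nonneg i i) (hG i j)
    simp only [Matrix.add_apply, two_smul, matAbs, hφ₂.1.mul_apply]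
    positivity
  have hCB := mulVec_lt_mulVec_of_diag_mul_le (d := fun i => 2 * φ₁ i i)
    (fun i => mul_pos two_pos (hφ₁.2 i)) (fun i => (hv i).le) hWv
    (two_mul_hSplitting_le_cmpMat_sub hA.2 hAMN hHsplit.diag_pos hφ hφ₁ hφ₂
      (fun i => by simpa [hφ₁.1.mul_apply] using hφ₂D i i) hGdiag hGoff)
  obtain ⟨hρ, hconv⟩ := specRad_lt_one_and_tendsto_of_mulVec_lt_cmpMat hv hC hCB
    (vecAbs_modulusRhs_sub_le _ _ hφ₂.nonneg _ hψ)
  have hfix : ∀ u, ICPsol A q ψ u → (φ₁ * M₁ + φ₁ * φ + φ₂) *ᵥ u =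
      modulusRhs (φ₁ * N₁ + φ₁ * φ) (φ₁ * A - φ₂) φ₂ (φ₁ *ᵥ q) ψ u := fun u hu => by
    rw [hu.modulusRhs_eq _ hφ₁.1 (fun i => hφ₁.nonneg i i) hφ₂.1 (fun i => hφ₂.nonneg i i),
      hAMN, Matrix.mul_sub]
    congr 1
    abel
  exact ⟨hρ, fun zstar hz => ⟨(hconv zstar (hfix zstar hz)).1,
    fun w hw => (hconv zstar (hfix zstar hz)).2 w (hfix w hw)⟩⟩
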